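/- arXiv:2604.21945 — 2 statements merged into one kernel-verified Lean document; each statement's English description precedes it below -/
import Mathlib

section
/- Lawvere's fixed point theorem: In a category with finite products, if there exists an object A and a morphism φ : A → Y^A that is point-surjective (i.e., for every point q : 1 → Y^A there exists a point p : 1 → A with φ∘p = q), then every endomorphism t : Y → Y has a fixed point, i.e., there exists a point y : 1 → Y with t∘y = y. -/
/-!
Cantor's diagonal argument: by point-surjectivity the map `a ↦ t (φ a a)` is `φ p` for some
point `p`, and then `φ p p` is a fixed point of `t`.
-/

open CategoryTheory CategoryTheory.Limits CategoryTheory.MonoidalCategory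
open CategoryTheory.CartesianClosed

namespace CategoryTheory

open CartesianMonoidalCategory MonoidalClosed

variable {C : Type*} [Category C] [CartesianMonoidalCategory C] [MonoidalClosed C]

def PointSurjective {X Z : C} (f : X ⟶ Z) : Prop :=
  ∀ q : 𝟙_ C ⟶ Z, ∃ p : 𝟙_ C ⟶ X, p ≫ f = q

lemma lift_comp_uncurry {A B Y : C} (φ : B ⟶ A ⟹ Y) (x : 𝟙_ C ⟶ A) (p : 𝟙_ C ⟶ B) :
    lift x p ≫ uncurry φ = x ≫ uncurry' (p ≫ φ) := by
  have hlift : lift x p = x ≫ (ρ_ A).inv ≫ A ◁ p := by ext <;> simp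
  rw [uncurry', uncurry_natural_left, hlift, Category.assoc, Category.assoc]

theorem exists_fixed_point_of_pointSurjective {A Y : C} {φ : A ⟶ A ⟹ Y}
    (hφ : PointSurjective φ) (t : Y ⟶ Y) : ∃ y : 𝟙_ C ⟶ Y, y ≫ t = y := by
  let diag : A ⟶ Y := lift (𝟙 A) (𝟙 A) ≫ uncurry φ
  obtain ⟨p, hp⟩ := hφ (curry' (diag ≫ t))
  refine ⟨lift p p ≫ uncurry φ, ?_⟩
  calc (lift p p ≫ uncurry φ) ≫ t
      = p ≫ diag ≫ t := by
        simp only [diag, comp_lift_assoc, Category.comp_id, Category.assoc]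
    _ = lift p p ≫ uncurry φ := by rw [lift_comp_uncurry, hp, uncurry'_curry']

end CategoryTheory

/-- Lawvere's fixed point theorem in a cartesian closed category: if
`φ : A ⟶ Y^A` is point-surjective then every `t : Y ⟶ Y` has a fixed point. -/
theorem lawvere_fixed_point {C : Type*} [Category C] [CartesianMonoidalCategory C]
    [MonoidalClosed C] (A Y : C) (φ : A ⟶ A ⟹ Y)
    (hφ : ∀ q : 𝟙_ C ⟶ A ⟹ Y, ∃ p : 𝟙_ C ⟶ A, p ≫ φ = q)
    (t : Y ⟶ Y) : ∃ y : 𝟙_ C ⟶ Y, y ≫ t = y :=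
  exists_fixed_point_of_pointSurjective hφ t
end

section
/- If a symmetric monoidal category admits natural transformations δ_A : A → A ⊗ A (copy) and ε_A : A → I (delete) making each object a commutative comonoid compatibly with the monoidal structure, then the monoidal structure is cartesian, i.e., A ⊗ B is a categorical product of A and B. -/
open CategoryTheory CategoryTheory.Limits CategoryTheory.MonoidalCategory

/-!
The pairing of `f : X ⟶ A` and `g : X ⟶ B` is `δ X ≫ (f ⊗ g)`; naturality of `ε` and
counitality give back `f` and `g` as its projections. For uniqueness, compatibility of `δ` with
`⊗` and counitality make `δ (A ⊗ B) ≫ (π₁ ⊗ π₂)` the identity (`π₁`, `π₂` the projections of the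
fan), so by naturality of `δ` every `m : X ⟶ A ⊗ B` is the pairing of its own projections.
-/

namespace CategoryTheory.MonoidalCategory

variable {C : Type*} [Category C] [MonoidalCategory C]

-- The braiding `β_ (𝟙_ C) (𝟙_ C)` is the identity, so this is pure coherence.
theorem tensorμ_tensorUnit_comp_unitors [BraidedCategory C] (X Y : C) :
    tensorμ X (𝟙_ C) (𝟙_ C) Y ≫ ((ρ_ X).hom ⊗ₘ (λ_ Y).hom) = (ρ_ X).hom ⊗ₘ (λ_ Y).hom := by
  rw [tensorμ, braiding_tensorUnit_left, unitors_equal]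
  monoidal

variable (δ : ∀ A : C, A ⟶ A ⊗ A) (ε : ∀ A : C, A ⟶ 𝟙_ C)

theorem copy_tensorHom_comp_fst
    (ε_nat : ∀ {A B : C} (f : A ⟶ B), f ≫ ε B = ε A)
    (counit_right : ∀ A : C, δ A ≫ (𝟙 A ⊗ₘ ε A) ≫ (ρ_ A).hom = 𝟙 A)
    {X A B : C} (f : X ⟶ A) (g : X ⟶ B) :
    δ X ≫ (f ⊗ₘ g) ≫ (𝟙 A ⊗ₘ ε B) ≫ (ρ_ A).hom = f := by
  calc δ X ≫ (f ⊗ₘ g) ≫ (𝟙 A ⊗ₘ ε B) ≫ (ρ_ A).hom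
      = δ X ≫ (𝟙 X ⊗ₘ ε X) ≫ (ρ_ X).hom ≫ f := by
        rw [tensorHom_comp_tensorHom_assoc, Category.comp_id, ε_nat, tensorHom_def'_assoc,
          rightUnitor_naturality, id_tensorHom]
    _ = f := by rw [reassoc_of% counit_right X]

theorem copy_tensorHom_comp_snd
    (ε_nat : ∀ {A B : C} (f : A ⟶ B), f ≫ ε B = ε A)
    (counit_left : ∀ A : C, δ A ≫ (ε A ⊗ₘ 𝟙 A) ≫ (λ_ A).hom = 𝟙 A)
    {X A B : C} (f : X ⟶ A) (g : X ⟶ B) :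
    δ X ≫ (f ⊗ₘ g) ≫ (ε A ⊗ₘ 𝟙 B) ≫ (λ_ B).hom = g := by
  calc δ X ≫ (f ⊗ₘ g) ≫ (ε A ⊗ₘ 𝟙 B) ≫ (λ_ B).hom
      = δ X ≫ (ε X ⊗ₘ 𝟙 X) ≫ (λ_ X).hom ≫ g := by
        rw [tensorHom_comp_tensorHom_assoc, Category.comp_id, ε_nat, tensorHom_def_assoc,
          leftUnitor_naturality, tensorHom_id]
    _ = g := by rw [reassoc_of% counit_left X]

theorem copy_tensor_comp_tensorHom_projections_eq_id [BraidedCategory C]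
    (counit_left : ∀ A : C, δ A ≫ (ε A ⊗ₘ 𝟙 A) ≫ (λ_ A).hom = 𝟙 A)
    (counit_right : ∀ A : C, δ A ≫ (𝟙 A ⊗ₘ ε A) ≫ (ρ_ A).hom = 𝟙 A)
    {A B : C} (δ_tensor : δ (A ⊗ B) = (δ A ⊗ₘ δ B) ≫ tensorμ A A B B) :
    δ (A ⊗ B) ≫ (((𝟙 A ⊗ₘ ε B) ≫ (ρ_ A).hom) ⊗ₘ ((ε A ⊗ₘ 𝟙 B) ≫ (λ_ B).hom)) = 𝟙 (A ⊗ B) :=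
  calc δ (A ⊗ B) ≫ (((𝟙 A ⊗ₘ ε B) ≫ (ρ_ A).hom) ⊗ₘ ((ε A ⊗ₘ 𝟙 B) ≫ (λ_ B).hom))
      = (δ A ⊗ₘ δ B) ≫ ((𝟙 A ⊗ₘ ε A) ⊗ₘ (ε B ⊗ₘ 𝟙 B)) ≫ tensorμ A (𝟙_ C) (𝟙_ C) B ≫
          ((ρ_ A).hom ⊗ₘ (λ_ B).hom) := by
        rw [δ_tensor, ← tensorHom_comp_tensorHom, tensorμ_natural_assoc, Category.assoc]
    _ = (δ A ≫ (𝟙 A ⊗ₘ ε A) ≫ (ρ_ A).hom) ⊗ₘ (δ B ≫ (ε B ⊗ₘ 𝟙 B) ≫ (λ_ B).hom) := by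
        simp only [tensorμ_tensorUnit_comp_unitors, tensorHom_comp_tensorHom]
    _ = 𝟙 (A ⊗ B) := by rw [counit_right, counit_left, id_tensorHom_id]

theorem eq_copy_comp_tensorHom
    (δ_nat : ∀ {A B : C} (f : A ⟶ B), f ≫ δ B = δ A ≫ (f ⊗ₘ f))
    {X A B : C} {p : A ⊗ B ⟶ A} {q : A ⊗ B ⟶ B} (hpq : δ (A ⊗ B) ≫ (p ⊗ₘ q) = 𝟙 (A ⊗ B))
    (m : X ⟶ A ⊗ B) :
    m = δ X ≫ ((m ≫ p) ⊗ₘ (m ≫ q)) := by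
  rw [← tensorHom_comp_tensorHom, ← reassoc_of% δ_nat m, hpq, Category.comp_id]

end CategoryTheory.MonoidalCategory

theorem fox_tensor_is_product_general {C : Type*} [Category C] [MonoidalCategory C]
    [SymmetricCategory C]
    (δ : ∀ A : C, A ⟶ A ⊗ A) (ε : ∀ A : C, A ⟶ 𝟙_ C)
    (δ_nat : ∀ {A B : C} (f : A ⟶ B), f ≫ δ B = δ A ≫ (f ⊗ₘ f))
    (ε_nat : ∀ {A B : C} (f : A ⟶ B), f ≫ ε B = ε A)
    (counit_left : ∀ A : C, δ A ≫ (ε A ⊗ₘ 𝟙 A) ≫ (λ_ A).hom = 𝟙 A)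
    (counit_right : ∀ A : C, δ A ≫ (𝟙 A ⊗ₘ ε A) ≫ (ρ_ A).hom = 𝟙 A)
    (δ_monoidal : ∀ A B : C,
      δ (A ⊗ B) =
        (δ A ⊗ₘ δ B) ≫ (α_ A A (B ⊗ B)).hom ≫
          (𝟙 A ⊗ₘ (α_ A B B).inv) ≫ (𝟙 A ⊗ₘ ((β_ A B).hom ⊗ₘ 𝟙 B)) ≫
          (𝟙 A ⊗ₘ (α_ B A B).hom) ≫ (α_ A B (A ⊗ B)).inv)
    (A B : C) :
    Nonempty (IsLimit (BinaryFan.mk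
      ((𝟙 A ⊗ₘ ε B) ≫ (ρ_ A).hom : A ⊗ B ⟶ A)
      ((ε A ⊗ₘ 𝟙 B) ≫ (λ_ B).hom : A ⊗ B ⟶ B))) := by
  have δ_tensor : δ (A ⊗ B) = (δ A ⊗ₘ δ B) ≫ tensorμ A A B B := by
    simp only [δ_monoidal, tensorμ, id_tensorHom, tensorHom_id]
  have copy_projections :=
    copy_tensor_comp_tensorHom_projections_eq_id δ ε counit_left counit_right δ_tensor
  exact ⟨BinaryFan.isLimitMk (fun s => δ s.pt ≫ (s.fst ⊗ₘ s.snd))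
    (fun s => (Category.assoc _ _ _).trans <|
      copy_tensorHom_comp_fst δ ε ε_nat counit_right s.fst s.snd)
    (fun s => (Category.assoc _ _ _).trans <|
      copy_tensorHom_comp_snd δ ε ε_nat counit_left s.fst s.snd)
    (fun s m h₁ h₂ => by rw [eq_copy_comp_tensorHom δ δ_nat copy_projections m, h₁, h₂])⟩

/-- Fox's theorem (one direction): natural commutative comonoid structure on every
object of a symmetric monoidal category, compatible with the monoidal structure,
makes the tensor product a categorical product. -/
theorem fox_tensor_is_product {C : Type*} [Category C] [MonoidalCategory C]
    [SymmetricCategory C]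
    (δ : ∀ A : C, A ⟶ A ⊗ A) (ε : ∀ A : C, A ⟶ 𝟙_ C)
    (δ_nat : ∀ {A B : C} (f : A ⟶ B), f ≫ δ B = δ A ≫ (f ⊗ₘ f))
    (ε_nat : ∀ {A B : C} (f : A ⟶ B), f ≫ ε B = ε A)
    (coassoc : ∀ A : C, δ A ≫ (δ A ⊗ₘ 𝟙 A) ≫ (α_ A A A).hom = δ A ≫ (𝟙 A ⊗ₘ δ A))
    (counit_left : ∀ A : C, δ A ≫ (ε A ⊗ₘ 𝟙 A) ≫ (λ_ A).hom = 𝟙 A)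
    (counit_right : ∀ A : C, δ A ≫ (𝟙 A ⊗ₘ ε A) ≫ (ρ_ A).hom = 𝟙 A)
    (cocomm : ∀ A : C, δ A ≫ (β_ A A).hom = δ A)
    (δ_monoidal : ∀ A B : C,
      δ (A ⊗ B) =
        (δ A ⊗ₘ δ B) ≫ (α_ A A (B ⊗ B)).hom ≫
          (𝟙 A ⊗ₘ (α_ A B B).inv) ≫ (𝟙 A ⊗ₘ ((β_ A B).hom ⊗ₘ 𝟙 B)) ≫
          (𝟙 A ⊗ₘ (α_ B A B).hom) ≫ (α_ A B (A ⊗ B)).inv)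
    (ε_monoidal : ∀ A B : C, ε (A ⊗ B) = (ε A ⊗ₘ ε B) ≫ (λ_ (𝟙_ C)).hom)
    (A B : C) :
    Nonempty (IsLimit (BinaryFan.mk
      ((𝟙 A ⊗ₘ ε B) ≫ (ρ_ A).hom : A ⊗ B ⟶ A)
      ((ε A ⊗ₘ 𝟙 B) ≫ (λ_ B).hom : A ⊗ B ⟶ B))) :=
  fox_tensor_is_product_general δ ε δ_nat ε_nat counit_left counit_right δ_monoidal A B
end
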